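/- For the data of Construction 2, for every nonzero j ∈ (ℤ/2ℤ)⁴ with j ∉ {1000, 0100, 1100}, the class K + L_j ∈ ℤ⁵ cannot be written as a ℕ-linear (nonnegative integer) combination of the ten classes e_1, e_2, e_3, e_4, h_{12}, h_{13}, h_{14}, h_{23}, h_{24}, h_{34}; that is, K + L_j is not an effective class, encoding h⁰(K_{Y_4} + L_χ) = 0 for all characters χ ∉ {χ_{1000}, χ_{0100}, χ_{1100}}. -/

import Mathlib

open Finset

namespace DP5

/-- The Picard lattice of the del Pezzo surface `Y₄` of degree 5,
modeled as `ℤ⁵` with basis `l, e₁, e₂, e₃, e₄`. -/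
abbrev Pic : Type := Fin 5 → ℤ

def l  : Pic := ![1, 0, 0, 0, 0]
def e1 : Pic := ![0, 1, 0, 0, 0]
def e2 : Pic := ![0, 0, 1, 0, 0]
def e3 : Pic := ![0, 0, 0, 1, 0]
def e4 : Pic := ![0, 0, 0, 0, 1]

/-- The intersection form: `l·l = 1`, `eᵢ·eᵢ = -1`, mixed products `0`. -/
def inter (v w : Pic) : ℤ :=
  v 0 * w 0 - v 1 * w 1 - v 2 * w 2 - v 3 * w 3 - v 4 * w 4

def f1 : Pic := l - e1
def f2 : Pic := l - e2
def f3 : Pic := l - e3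
def f4 : Pic := l - e4

def h12 : Pic := l - e1 - e2
def h13 : Pic := l - e1 - e3
def h14 : Pic := l - e1 - e4
def h23 : Pic := l - e2 - e3
def h24 : Pic := l - e2 - e4
def h34 : Pic := l - e3 - e4

/-- The canonical class `K = -3l + e₁ + e₂ + e₃ + e₄` of `Y₄`. -/
def K : Pic := (-3 : ℤ) • l + e1 + e2 + e3 + e4

/-- Elements/characters of `(ℤ/2ℤ)⁴`, written as bit strings `σ₁σ₂σ₃σ₄`. -/
abbrev Char4 : Type := Fin 4 → ZMod 2

/-- The ten (−1)-curve classes on `Y₄`, generating the effective cone. -/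
def tenLines : Fin 10 → Pic := ![e1, e2, e3, e4, h12, h13, h14, h23, h24, h34]

/-- Construction 2: the classes `L_χ`. -/
def L2 (j : Char4) : Pic :=
  if j = ![0,0,0,1] then (2 : ℤ) • f1 + f2 - e3 else
  if j = ![0,0,1,0] then f2 + l else
  if j = ![0,1,0,0] then f1 + f2 + f3 - e4 else
  if j = ![1,0,0,0] then f1 + f2 + f3 - e4 else
  if j = ![0,0,1,1] then f1 + (2 : ℤ) • f2 - e3 - e4 else
  if j = ![0,1,0,1] then f2 + f3 else
  if j = ![0,1,1,0] then (2 : ℤ) • f1 + f2 - e3 - e4 else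
  if j = ![0,1,1,1] then f2 + f3 - e4 else
  if j = ![1,0,0,1] then f3 + f4 else
  if j = ![1,0,1,0] then f1 + f2 + f3 - e3 else
  if j = ![1,0,1,1] then f1 + f4 else
  if j = ![1,1,0,0] then f1 + f2 + f3 - e4 else
  if j = ![1,1,0,1] then f1 + f2 else
  if j = ![1,1,1,0] then l else
  if j = ![1,1,1,1] then f1 + f3 else 0

/-! An effective class meets every nef class nonnegatively, so it suffices to find, for each
admissible `j`, one of the nef classes `l, f₁, f₂, f₃` meeting `K + L_j` negatively. -/

/-- Testing against the ten (−1)-curves suffices, since they generate the effective monoid. -/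
def IsNef (N : Pic) : Prop := ∀ i, 0 ≤ inter (tenLines i) N

lemma inter_sum_smul_left {ι : Type*} (s : Finset ι) (c : ι → ℤ) (v : ι → Pic) (N : Pic) :
    inter (∑ i ∈ s, c i • v i) N = ∑ i ∈ s, c i * inter (v i) N := by
  simp only [inter, Finset.sum_apply, Pi.smul_apply, smul_eq_mul, Finset.sum_mul,
    ← Finset.sum_sub_distrib]
  exact Finset.sum_congr rfl fun i _ => by ring

lemma IsNef.inter_nonneg {N : Pic} (hN : IsNef N) (c : Fin 10 → ℕ) :
    0 ≤ inter (∑ i, (c i : ℤ) • tenLines i) N := by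
  rw [inter_sum_smul_left]
  exact Finset.sum_nonneg fun i _ => mul_nonneg (Int.natCast_nonneg _) (hN i)

lemma IsNef.not_effective {N D : Pic} (hN : IsNef N) (hD : inter D N < 0) :
    ¬ ∃ c : Fin 10 → ℕ, D = ∑ i, (c i : ℤ) • tenLines i := by
  rintro ⟨c, rfl⟩
  exact hD.not_ge (hN.inter_nonneg c)

lemma isNef_l : IsNef l := by unfold IsNef; decide
lemma isNef_f1 : IsNef f1 := by unfold IsNef; decide
lemma isNef_f2 : IsNef f2 := by unfold IsNef; decide
lemma isNef_f3 : IsNef f3 := by unfold IsNef; decide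

/-- `K + L_j` has negative `l`-degree except for `j = 0001, 0011, 0110, 1010`, where it is
`e₄ − e₁, −e₂, −e₁, e₄ − e₃`, detected by the conic classes `f₁, f₂, f₁, f₃`. -/
lemma inter_K_add_L2_neg (j : Char4)
    (hj : j ∉ ([![1,0,0,0], ![0,1,0,0], ![1,1,0,0]] : List Char4)) :
    inter (K + L2 j) l < 0 ∨ inter (K + L2 j) f1 < 0 ∨ inter (K + L2 j) f2 < 0 ∨
      inter (K + L2 j) f3 < 0 := by
  revert j
  decide

theorem construction2_KL_not_effective_general (j : Char4)
    (hj' : j ∉ ([![1,0,0,0], ![0,1,0,0], ![1,1,0,0]] : List Char4)) :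
    ¬ ∃ c : Fin 10 → ℕ, K + L2 j = ∑ i : Fin 10, (c i : ℤ) • tenLines i := by
  rcases inter_K_add_L2_neg j hj' with h | h | h | h
  exacts [isNef_l.not_effective h, isNef_f1.not_effective h, isNef_f2.not_effective h,
    isNef_f3.not_effective h]

/-- Construction 2: for every nontrivial character `χ ∉ {χ_1000, χ_0100, χ_1100}`
the class `K + L_χ` is not an ℕ-combination of the ten (−1)-curve classes,
i.e. it is not effective (so `h⁰(K + L_χ) = 0`). -/
theorem construction2_KL_not_effective (j : Char4) (hj : j ≠ 0)
    (hj' : j ∉ ([![1,0,0,0], ![0,1,0,0], ![1,1,0,0]] : List Char4)) :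
    ¬ ∃ c : Fin 10 → ℕ, K + L2 j = ∑ i : Fin 10, (c i : ℤ) • tenLines i :=
  construction2_KL_not_effective_general j hj'
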